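/- arXiv:2211.10702 — 6 statements merged into one kernel-verified Lean document; each statement's English description precedes it below -/
import Mathlib

section
/- Let ε be an exchange matrix on a finite index set I, let k ∈ I, and set ε' = μ_k(ε). Then the composite of X-variable mutations μ*_{k,ε} ∘ μ*_{k,ε'} is the identity map on the field ℚ(X_i : i ∈ I); that is, mutation of X-variables is involutive. -/
open scoped BigOperators

namespace Paper

/-- sign convention: `+1` for `a ≥ 0`, `-1` for `a < 0`. -/
def sgn (a : ℤ) : ℤ := if 0 ≤ a then 1 else -1

variable {I : Type} [DecidableEq I]

/-- Mutation of an exchange matrix in the direction `k`. -/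
def mutMat (ε : I → I → ℤ) (k : I) : I → I → ℤ := fun i j =>
  if i = k ∨ j = k then -ε i j
  else ε i j + (|ε i k| * ε k j + ε i k * |ε k j|) / 2

/-- The exchange matrix of a quiver given by its list of arrows:
`ε i j` = (number of arrows `j → i`) − (number of arrows `i → j`). -/
def matOfArrows (arrows : List (I × I)) : I → I → ℤ := fun i j =>
  (arrows.count (j, i) : ℤ) - (arrows.count (i, j) : ℤ)

/-- X-variable mutation rule at `k` relative to `ε`, as a transformation of the
tuple of images of the generators. -/
noncomputable def mutX {K : Type} [Field K] (ε : I → I → ℤ) (k : I) (x : I → K) :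
    I → K := fun i =>
  if i = k then (x k)⁻¹
  else x i * (1 + x k ^ sgn (-ε i k)) ^ (-ε i k)

/-- A-variable mutation rule at `k` relative to `ε`. -/
noncomputable def mutA {K : Type} [Field K] [Fintype I] (ε : I → I → ℤ) (k : I)
    (a : I → K) : I → K := fun i =>
  if i = k then
    (a k)⁻¹ * ((∏ j, if 0 < ε k j then a j ^ ε k j else 1)
      + (∏ j, if ε k j < 0 then a j ^ (-ε k j) else 1))
  else a i

/-- B-variable part of the D-variable mutation rule at `k` relative to `ε`. -/
noncomputable def mutB {K : Type} [Field K] [Fintype I] (ε : I → I → ℤ) (k : I)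
    (x b : I → K) : I → K := fun i =>
  if i = k then
    (x k * (∏ j, if 0 < ε k j then b j ^ ε k j else 1)
      + (∏ j, if ε k j < 0 then b j ^ (-ε k j) else 1)) / (b k * (1 + x k))
  else b i

/-- The rational function field `ℚ(X_i : i ∈ σ)`. -/
abbrev RF (σ : Type) := FractionRing (MvPolynomial σ ℚ)

/-- The generator (variable) `X_i` of the rational function field. -/
noncomputable def gen {σ : Type} (i : σ) : RF σ :=
  algebraMap (MvPolynomial σ ℚ) (RF σ) (MvPolynomial.X i)

/-- An elementary operation: a mutation at a vertex, or a relabeling automorphism. -/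
inductive Op (I : Type) where
  | mut : I → Op I
  | perm : Equiv.Perm I → Op I

/-- Action of an operation on the exchange matrix: mutation mutates; a relabeling
`α` produces `ε'` with `ε' (α i) (α j) = ε i j`. -/
def stepMat (ε : I → I → ℤ) : Op I → I → I → ℤ
  | .mut k => mutMat ε k
  | .perm α => fun i j => ε (α.symm i) (α.symm j)

/-- One step of the evolution of (exchange matrix, X-variable tuple). -/
noncomputable def stepX {K : Type} [Field K] (s : (I → I → ℤ) × (I → K)) (o : Op I) :
    (I → I → ℤ) × (I → K) :=
  match o with
  | .mut k => (mutMat s.1 k, mutX s.1 k s.2)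
  | .perm α => (stepMat s.1 (.perm α), fun i => s.2 (α.symm i))

/-- One step of the evolution of (exchange matrix, A-variable tuple). -/
noncomputable def stepA {K : Type} [Field K] [Fintype I]
    (s : (I → I → ℤ) × (I → K)) (o : Op I) : (I → I → ℤ) × (I → K) :=
  match o with
  | .mut k => (mutMat s.1 k, mutA s.1 k s.2)
  | .perm α => (stepMat s.1 (.perm α), fun i => s.2 (α.symm i))

/-- One step of the evolution of (exchange matrix, X-tuple, B-tuple). -/
noncomputable def stepD {K : Type} [Field K] [Fintype I]
    (s : (I → I → ℤ) × (I → K) × (I → K)) (o : Op I) :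
    (I → I → ℤ) × (I → K) × (I → K) :=
  match o with
  | .mut k => (mutMat s.1 k, mutX s.1 k s.2.1, mutB s.1 k s.2.1 s.2.2)
  | .perm α => (stepMat s.1 (.perm α), (fun i => s.2.1 (α.symm i)),
      fun i => s.2.2 (α.symm i))

/-- Tropical X-vector mutation at `k` relative to `ε`: `v_k ↦ -v_k` and, for `i ≠ k`,
`v_i ↦ v_i − ε_{ik} · min(0, sgn(−ε_{ik}) v_k)` (componentwise minimum). -/
def tropStep (ε : I → I → ℤ) (k : I) (v : I → I → ℤ) : I → I → ℤ := fun i j =>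
  if i = k then -(v k j)
  else v i j - ε i k * min 0 (sgn (-ε i k) * v k j)

/-- One step of the evolution of (exchange matrix, tropical X-vectors). -/
def stepTrop (s : (I → I → ℤ) × (I → I → ℤ)) (o : Op I) :
    (I → I → ℤ) × (I → I → ℤ) :=
  match o with
  | .mut k => (mutMat s.1 k, tropStep s.1 k s.2)
  | .perm α => (stepMat s.1 (.perm α), fun i => s.2 (α.symm i))

/-- The initial tropical X-vectors `v_i = e_i`. -/
def delta : I → I → ℤ := fun i j => if i = j then 1 else 0


lemma key_cancel {K : Type} [Field K] {X : K} (h1 : 1 + X ≠ 0)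
    (h2 : 1 + X⁻¹ ≠ 0) (a : ℤ) :
    (1 + X ^ sgn (-a)) ^ (-a) * (1 + X⁻¹ ^ sgn a) ^ a = 1 := by
  rcases lt_trichotomy a 0 with h | h | h
  · have hs1 : sgn (-a) = 1 := if_pos (by omega)
    have hs2 : sgn a = -1 := if_neg (by omega)
    rw [hs1, hs2, zpow_one, zpow_neg_one, inv_inv, ← zpow_add₀ h1, neg_add_cancel,
      zpow_zero]
  · subst h; simp
  · have hs1 : sgn (-a) = -1 := if_neg (by omega)
    have hs2 : sgn a = 1 := if_pos (by omega)
    rw [hs1, hs2, zpow_one, zpow_neg_one, ← zpow_add₀ h2, neg_add_cancel, zpow_zero]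

/-- mutation of X-variables is involutive: the composite substitution
`μ*_{k,ε} ∘ μ*_{k,ε'}` (with `ε' = μ_k(ε)`) fixes every generator of `ℚ(X_i : i ∈ I)`,
hence is the identity map of the field. -/
theorem mutX_involutive {I : Type} [Fintype I] [DecidableEq I]
    (ε : I → I → ℤ) (hskew : ∀ i j, ε j i = -ε i j) (k : I) :
    mutX (mutMat ε k) k (mutX ε k (fun i => (gen i : RF I))) = fun i => gen i := by
  have hinj := IsFractionRing.injective (MvPolynomial I ℚ) (RF I)
  have h1 : (1 : RF I) + gen k ≠ 0 := by
    intro h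
    have h' : algebraMap (MvPolynomial I ℚ) (RF I) (1 + MvPolynomial.X k) = 0 := by
      simpa [gen, map_add] using h
    have h0 : (1 + MvPolynomial.X k : MvPolynomial I ℚ) = 0 := by
      apply hinj; simpa using h'
    have := congrArg (MvPolynomial.eval (fun _ => (0 : ℚ))) h0
    simp at this
  have hX : (gen k : RF I) ≠ 0 := by
    intro h
    have h0 : (MvPolynomial.X k : MvPolynomial I ℚ) = 0 := by
      apply hinj; simpa [gen] using h
    have := congrArg (MvPolynomial.eval (fun _ => (1 : ℚ))) h0
    simp at this
  have h2 : (1 : RF I) + (gen k)⁻¹ ≠ 0 := by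
    intro h
    have hx : (gen k : RF I)⁻¹ = -1 := by linear_combination h
    have : (gen k : RF I) = -1 := by
      rw [← inv_inv (gen k : RF I), hx]; norm_num
    exact h1 (by rw [this]; ring)
  funext i
  by_cases hik : i = k
  · subst hik
    simp [mutX, inv_inv]
  · have hek : mutMat ε k i k = -ε i k := by simp [mutMat]
    simp only [mutX, if_neg hik, if_pos rfl, hek, neg_neg, mul_assoc, if_true]
    rw [key_cancel h1 h2, mul_one]

end Paper
end

section
/- Let ε be an exchange matrix on a finite index set I, let k ∈ I, and set ε' = μ_k(ε). Then the composite of D-variable mutations μ^{D*}_{k,ε} ∘ μ^{D*}_{k,ε'} is the identity map on the field ℚ(X_i, B_i : i ∈ I); that is, mutation of D-variables is involutive. -/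
open scoped BigOperators

namespace Paper

variable {I : Type} [DecidableEq I]

section Aux

lemma algebraMap_ne_zero' {σ : Type} {p : MvPolynomial σ ℚ} (h : p ≠ 0) :
    algebraMap (MvPolynomial σ ℚ) (RF σ) p ≠ 0 :=
  (map_ne_zero_iff _ (IsFractionRing.injective _ _)).mpr h

lemma gen_ne_zero {σ : Type} (i : σ) : (gen i : RF σ) ≠ 0 :=
  algebraMap_ne_zero' (MvPolynomial.X_ne_zero i)

lemma one_add_gen_ne_zero {σ : Type} (i : σ) : (1 : RF σ) + gen i ≠ 0 := by
  have : (1 : RF σ) + gen i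
      = algebraMap (MvPolynomial σ ℚ) (RF σ) (1 + MvPolynomial.X i) := by
    simp [gen]
  rw [this]
  apply algebraMap_ne_zero'
  intro h0
  have := congrArg (MvPolynomial.eval (fun _ => (1 : ℚ))) h0
  simp at this

lemma key_zpow {K : Type} [Field K] (u : K) (hu : u ≠ 0) (hu1 : 1 + u ≠ 0) (e : ℤ) :
    (1 + u ^ sgn (-e)) ^ (-e) * (1 + u⁻¹ ^ sgn e) ^ e = 1 := by
  have hui : 1 + u⁻¹ ≠ 0 := by
    have h : 1 + u⁻¹ = u⁻¹ * (1 + u) := by field_simp; ring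
    rw [h]
    exact mul_ne_zero (inv_ne_zero hu) hu1
  rcases lt_trichotomy e 0 with h | h | h
  · have h1 : sgn (-e) = 1 := by simp [sgn]; omega
    have h2 : sgn e = -1 := by simp [sgn]; omega
    rw [h1, h2, zpow_one, zpow_neg_one, inv_inv, ← zpow_add₀ hu1]
    simp
  · subst h; simp
  · have h1 : sgn (-e) = -1 := by simp [sgn]; omega
    have h2 : sgn e = 1 := by simp [sgn]; omega
    rw [h1, h2, zpow_one, zpow_neg_one, ← zpow_add₀ hui]
    simp

end Aux

/-- mutation of D-variables is involutive: the composite substitution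
`μ^{D*}_{k,ε} ∘ μ^{D*}_{k,ε'}` (with `ε' = μ_k(ε)`) fixes every generator
`X_i`, `B_i` of `ℚ(X_i, B_i : i ∈ I)`, hence is the identity map of the field. -/
theorem mutD_involutive {I : Type} [Fintype I] [DecidableEq I]
    (ε : I → I → ℤ) (hskew : ∀ i j, ε j i = -ε i j) (k : I) :
    (mutX (mutMat ε k) k (mutX ε k (fun i => (gen (Sum.inl i) : RF (I ⊕ I)))) =
        fun i => gen (Sum.inl i)) ∧
    (mutB (mutMat ε k) k
        (mutX ε k (fun i => (gen (Sum.inl i) : RF (I ⊕ I))))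
        (mutB ε k (fun i => (gen (Sum.inl i) : RF (I ⊕ I)))
          (fun i => gen (Sum.inr i))) =
      fun i => gen (Sum.inr i)) := by
  classical
  set x : I → RF (I ⊕ I) := fun i => gen (Sum.inl i) with hx
  set b : I → RF (I ⊕ I) := fun i => gen (Sum.inr i) with hb
  have hkk : ε k k = 0 := by have := hskew k k; omega
  have hu : x k ≠ 0 := gen_ne_zero _
  have hu1 : (1 : RF (I ⊕ I)) + x k ≠ 0 := one_add_gen_ne_zero _
  have hui : (1 : RF (I ⊕ I)) + (x k)⁻¹ ≠ 0 := by
    have h : (1 : RF (I ⊕ I)) + (x k)⁻¹ = (x k)⁻¹ * (1 + x k) := by field_simp; ring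
    rw [h]; exact mul_ne_zero (inv_ne_zero hu) hu1
  have hmk : ∀ i, mutMat ε k i k = -ε i k := by
    intro i; simp [mutMat]
  have hmkj : ∀ j, j ≠ k → mutMat ε k k j = -ε k j := by
    intro j hj; simp [mutMat]
  constructor
  · funext i
    by_cases hi : i = k
    · subst hi; simp [mutX]
    · simp only [mutX, if_neg hi, eq_self_iff_true, if_true, hmk i, neg_neg]
      rw [mul_assoc, key_zpow (x k) hu hu1 (ε i k), mul_one]
  · funext i
    by_cases hi : i = k
    · rw [hi]
      -- products for the mutated matrix equal swapped original products
      set P : RF (I ⊕ I) := ∏ j, if 0 < ε k j then b j ^ ε k j else 1 with hP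
      set Q : RF (I ⊕ I) := ∏ j, if ε k j < 0 then b j ^ (-ε k j) else 1 with hQ
      set b' : I → RF (I ⊕ I) := mutB ε k x b with hb'
      have hb'j : ∀ j, j ≠ k → b' j = b j := by
        intro j hj; simp [hb', mutB, hj]
      have hP' : (∏ j, if 0 < mutMat ε k k j then b' j ^ mutMat ε k k j else 1) = Q := by
        rw [hQ]
        apply Finset.prod_congr rfl
        intro j _
        by_cases hj : j = k
        · subst hj; simp [mutMat, hkk]
        · rw [hmkj j hj, hb'j j hj]
          by_cases h : ε k j < 0
          · rw [if_pos (by omega : (0:ℤ) < -ε k j), if_pos h]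
          · rw [if_neg (by omega : ¬ (0:ℤ) < -ε k j), if_neg h]
      have hQ' : (∏ j, if mutMat ε k k j < 0 then b' j ^ (-mutMat ε k k j) else 1) = P := by
        rw [hP]
        apply Finset.prod_congr rfl
        intro j _
        by_cases hj : j = k
        · subst hj; simp [mutMat, hkk]
        · rw [hmkj j hj, hb'j j hj, neg_neg]
          by_cases h : 0 < ε k j
          · rw [if_pos (by omega : -ε k j < 0), if_pos h]
          · rw [if_neg (by omega : ¬ -ε k j < 0), if_neg h]
      -- nonzeroness of x k * P + Q via polynomials
      set p : MvPolynomial (I ⊕ I) ℚ :=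
        ∏ j, if 0 < ε k j then MvPolynomial.X (Sum.inr j) ^ (ε k j).toNat else 1 with hp
      set q : MvPolynomial (I ⊕ I) ℚ :=
        ∏ j, if ε k j < 0 then MvPolynomial.X (Sum.inr j) ^ (-ε k j).toNat else 1 with hq
      have hPalg : P = algebraMap (MvPolynomial (I ⊕ I) ℚ) (RF (I ⊕ I)) p := by
        rw [hp, map_prod]
        apply Finset.prod_congr rfl
        intro j _
        by_cases h : 0 < ε k j
        · rw [if_pos h, if_pos h, map_pow]
          rw [show b j = algebraMap (MvPolynomial (I ⊕ I) ℚ) (RF (I ⊕ I))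
              (MvPolynomial.X (Sum.inr j)) from rfl]
          rw [← zpow_natCast, Int.toNat_of_nonneg h.le]
        · rw [if_neg h, if_neg h, map_one]
      have hQalg : Q = algebraMap (MvPolynomial (I ⊕ I) ℚ) (RF (I ⊕ I)) q := by
        rw [hq, map_prod]
        apply Finset.prod_congr rfl
        intro j _
        by_cases h : ε k j < 0
        · rw [if_pos h, if_pos h, map_pow]
          rw [show b j = algebraMap (MvPolynomial (I ⊕ I) ℚ) (RF (I ⊕ I))
              (MvPolynomial.X (Sum.inr j)) from rfl]
          rw [← zpow_natCast, Int.toNat_of_nonneg (by omega : (0:ℤ) ≤ -ε k j)]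
        · rw [if_neg h, if_neg h, map_one]
      have ht : x k * P + Q ≠ 0 := by
        have heq : x k * P + Q = algebraMap (MvPolynomial (I ⊕ I) ℚ) (RF (I ⊕ I))
            (MvPolynomial.X (Sum.inl k) * p + q) := by
          rw [hPalg, hQalg, map_add, map_mul]; rfl
        rw [heq]
        apply algebraMap_ne_zero'
        intro h0
        have hpe : MvPolynomial.eval (fun _ => (1 : ℚ)) p = 1 := by
          rw [hp]
          simp [MvPolynomial.eval_prod, apply_ite (MvPolynomial.eval (fun _ => (1 : ℚ)))]
        have hqe : MvPolynomial.eval (fun _ => (1 : ℚ)) q = 1 := by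
          rw [hq]
          simp [MvPolynomial.eval_prod, apply_ite (MvPolynomial.eval (fun _ => (1 : ℚ)))]
        have := congrArg (MvPolynomial.eval (fun _ => (1 : ℚ))) h0
        simp [hpe, hqe] at this
      have hbk : b k ≠ 0 := gen_ne_zero _
      -- now compute
      have hxk : mutX ε k x k = (x k)⁻¹ := by simp [mutX]
      have hbk' : b' k = (x k * P + Q) / (b k * (1 + x k)) := by
        simp [hb', mutB, hP, hQ]
      simp only [mutB, eq_self_iff_true, if_true, hP', hQ', hxk, hbk']
      rw [div_eq_iff]
      · field_simp
        ring
      · apply mul_ne_zero _ hui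
        rw [div_ne_zero_iff]
        exact ⟨ht, mul_ne_zero hbk hu1⟩
    · simp [mutB, hi]

end Paper
end

section
/- Let I consist of the eight subsets of {1,2,3} together with the three crossing labels 12, 13, 23. Let ε be the exchange matrix of the butterfly quiver assigned to the word 121, with arrows 12→∅, ∅→{1}, {1}→12, 12→{1,2}, {2}→12, 13→{2}, {1,2}→13, 13→{1,2,3}, {1,2,3}→{2,3}, {2,3}→13, 23→∅, ∅→{2}, {2}→23, 23→{2,3}, {2,3}→{3}, {3}→23 (and {1,3} an isolated vertex), and let ε'' be the exchange matrix of the butterfly quiver assigned to the word 212, with arrows 23→{1}, {1}→{1,2}, {1,2}→23, 23→{1,2,3}, {1,2,3}→{1,3}, {1,3}→23, 13→∅, ∅→{1}, {1}→13, 13→{1,3}, {3}→13, 12→{3}, {1,3}→12, 12→{1,2,3}, {1,2,3}→{2,3}, {2,3}→12 (and {2} an isolated vertex). Then the braid move is realized by four mutations and three relabelings: applying to ε the mutations at {2}, then 12, then 23, then 13, and then relabeling successively by the transpositions (12 23), ({2} 13), ({2} {1,3}), yields ε''. -/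
open scoped BigOperators

namespace Paper

variable {I : Type} [DecidableEq I]

/-- Vertex set for the butterfly quivers on three wires: the subsets of `{1,2,3}`
(encoded as `Finset (Fin 3)`, with `a ∈ {1,2,3}` encoded as `a-1`) together with the
three crossing labels `12, 13, 23` (encoded as `Sum.inr 0, Sum.inr 1, Sum.inr 2`). -/
abbrev B3 : Type := Finset (Fin 3) ⊕ Fin 3

/-- Butterfly quiver of the word `121`: arrows `12→∅, ∅→{1}, {1}→12, 12→{1,2}, {2}→12,
13→{2}, {1,2}→13, 13→{1,2,3}, {1,2,3}→{2,3}, {2,3}→13, 23→∅, ∅→{2}, {2}→23, 23→{2,3},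
{2,3}→{3}, {3}→23` (and `{1,3}` isolated). -/
def butterfly121 : B3 → B3 → ℤ :=
  matOfArrows [((Sum.inr 0 : B3), Sum.inl ∅), (Sum.inl ∅, Sum.inl {0}),
    (Sum.inl {0}, Sum.inr 0), (Sum.inr 0, Sum.inl {0,1}), (Sum.inl {1}, Sum.inr 0),
    (Sum.inr 1, Sum.inl {1}), (Sum.inl {0,1}, Sum.inr 1),
    (Sum.inr 1, Sum.inl {0,1,2}), (Sum.inl {0,1,2}, Sum.inl {1,2}),
    (Sum.inl {1,2}, Sum.inr 1),
    (Sum.inr 2, Sum.inl ∅), (Sum.inl ∅, Sum.inl {1}), (Sum.inl {1}, Sum.inr 2),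
    (Sum.inr 2, Sum.inl {1,2}), (Sum.inl {1,2}, Sum.inl {2}), (Sum.inl {2}, Sum.inr 2)]

/-- Butterfly quiver of the word `212`: arrows `23→{1}, {1}→{1,2}, {1,2}→23,
23→{1,2,3}, {1,2,3}→{1,3}, {1,3}→23, 13→∅, ∅→{1}, {1}→13, 13→{1,3}, {3}→13, 12→{3},
{1,3}→12, 12→{1,2,3}, {1,2,3}→{2,3}, {2,3}→12` (and `{2}` isolated). -/
def butterfly212 : B3 → B3 → ℤ :=
  matOfArrows [((Sum.inr 2 : B3), Sum.inl {0}), (Sum.inl {0}, Sum.inl {0,1}),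
    (Sum.inl {0,1}, Sum.inr 2), (Sum.inr 2, Sum.inl {0,1,2}),
    (Sum.inl {0,1,2}, Sum.inl {0,2}), (Sum.inl {0,2}, Sum.inr 2),
    (Sum.inr 1, Sum.inl ∅), (Sum.inl ∅, Sum.inl {0}), (Sum.inl {0}, Sum.inr 1),
    (Sum.inr 1, Sum.inl {0,2}), (Sum.inl {2}, Sum.inr 1),
    (Sum.inr 0, Sum.inl {2}), (Sum.inl {0,2}, Sum.inr 0),
    (Sum.inr 0, Sum.inl {0,1,2}), (Sum.inl {0,1,2}, Sum.inl {1,2}),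
    (Sum.inl {1,2}, Sum.inr 0)]

set_option maxHeartbeats 4000000 in
/-- for the butterfly quivers, the braid move `121 → 212` is realized by
the four mutations at `{2}, 12, 23, 13` (in this order) followed by the relabelings
exchanging successively `12 ↔ 23`, `{2} ↔ 13` and `{2} ↔ {1,3}`. -/
theorem butterfly_braid_move :
    ([Op.mut (Sum.inl {1} : B3), Op.mut (Sum.inr 0), Op.mut (Sum.inr 2),
        Op.mut (Sum.inr 1),
        Op.perm (Equiv.swap (Sum.inr 0 : B3) (Sum.inr 2)),
        Op.perm (Equiv.swap (Sum.inl ({1} : Finset (Fin 3)) : B3) (Sum.inr 1)),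
        Op.perm (Equiv.swap (Sum.inl ({1} : Finset (Fin 3)) : B3)
          (Sum.inl {0,2}))].foldl stepMat butterfly121)
      = butterfly212 := by
  decide

end Paper
end

section
/- Let I = {1,…,10} and let ε be the exchange matrix of the triangle quiver assigned to the reduced word 123121, with arrows 1→2, 2→3, 3→6, 7→3, 6→7, 7→9, 10→7, 9→10, 3→4, 4→7, 8→4, 7→8, 5→1, 4→5. Start the tropical X-vectors at v_i = e_i (standard basis of ℤ^{10}) and apply the mutations at 4, 7, 3, 4, 7, 3, 4, 7 (in this order) followed by the transpositions (3 7) and (4 7). Then the final exchange matrix equals ε and the final tropical X-vectors satisfy v_i = e_i for all i ∈ I. -/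
open scoped BigOperators

namespace Paper

variable {I : Type} [DecidableEq I]

/-- The triangle quiver assigned to the reduced word `123121` for the longest element
of `S_4`, on vertices `1,…,10` (encoded as `Fin 10`, vertex `n` as `n-1`), with arrows
`1→2, 2→3, 3→6, 7→3, 6→7, 7→9, 10→7, 9→10, 3→4, 4→7, 8→4, 7→8, 5→1, 4→5`. -/
def triangle123121 : Fin 10 → Fin 10 → ℤ :=
  matOfArrows [(0,1),(1,2),(2,5),(6,2),(5,6),(6,8),(9,6),(8,9),(2,3),(3,6),(7,3),(6,7),(4,0),(3,4)]

/-- The mutation-automorphism sequence: mutations at `4, 7, 3, 4, 7, 3, 4, 7` followed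
by the transpositions `(3 7)` and `(4 7)`. -/
def triangleOps : List (Op (Fin 10)) :=
  [.mut 3, .mut 6, .mut 2, .mut 3, .mut 6, .mut 2, .mut 3, .mut 6,
   .perm (Equiv.swap 2 6), .perm (Equiv.swap 3 6)]

/-- applying the above sequence to the triangle quiver of `123121`,
starting the tropical X-vectors at the standard basis `v_i = e_i` of `ℤ^{10}`,
returns both the exchange matrix and the tropical X-vectors to their initial values. -/
theorem triangle_trop_trivial :
    (triangleOps.foldl stepTrop (triangle123121, delta)).1 = triangle123121 ∧
    (triangleOps.foldl stepTrop (triangle123121, delta)).2 = delta := by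
  constructor <;> · funext i j; fin_cases i <;> fin_cases j <;> decide

end Paper
end

section
/- Let I = {1,…,17} and let ε be the exchange matrix of the butterfly quiver assigned to the reduced word 123121, with arrows 3→1, 1→2, 2→3, 3→9, 4→3, 10→4, 9→10, 10→14, 11→10, 15→11, 14→15, 15→17, 17→16, 16→15, 5→1, 1→4, 4→5, 5→11, 6→5, 12→6, 11→12, 12→16, 16→13, 13→12, 7→1, 1→6, 6→7, 7→13, 13→8, 8→7. Start the tropical X-vectors at v_i = e_i (standard basis of ℤ^{17}) and apply the 32 mutations at the vertices 6, 5, 7, 12, 11, 10, 5, 15, 4, 3, 6, 11, 12, 6, 7, 5, 15, 6, 10, 3, 11, 12, 6, 4, 5, 7, 15, 11, 3, 15, 10, 6 (in this order) followed by the transpositions (3 10), (4 6), (5 15), (7 12). Then the final exchange matrix equals ε and the final tropical X-vectors satisfy v_i = e_i for all i ∈ I. -/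
open scoped BigOperators

namespace Paper

variable {I : Type} [DecidableEq I]

/-- The butterfly quiver assigned to the reduced word `123121` for the longest element
of `S_4`, on vertices `1,…,17` (encoded as `Fin 17`, vertex `n` as `n-1`), with arrows
`3→1, 1→2, 2→3, 3→9, 4→3, 10→4, 9→10, 10→14, 11→10, 15→11, 14→15, 15→17, 17→16,
16→15, 5→1, 1→4, 4→5, 5→11, 6→5, 12→6, 11→12, 12→16, 16→13, 13→12, 7→1, 1→6, 6→7,
7→13, 13→8, 8→7`. -/
def butterfly123121 : Fin 17 → Fin 17 → ℤ :=
  matOfArrows [(2,0),(0,1),(1,2),(2,8),(3,2),(9,3),(8,9),(9,13),(10,9),(14,10),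
    (13,14),(14,16),(16,15),(15,14),(4,0),(0,3),(3,4),(4,10),(5,4),(11,5),(10,11),
    (11,15),(15,12),(12,11),(6,0),(0,5),(5,6),(6,12),(12,7),(7,6)]

/-- The mutation-automorphism sequence: the 32 mutations at
`6, 5, 7, 12, 11, 10, 5, 15, 4, 3, 6, 11, 12, 6, 7, 5, 15, 6, 10, 3, 11, 12, 6, 4, 5,
7, 15, 11, 3, 15, 10, 6` followed by the transpositions
`(3 10), (4 6), (5 15), (7 12)`. -/
def butterflyOps : List (Op (Fin 17)) :=
  (([5,4,6,11,10,9,4,14,3,2,5,10,11,5,6,4,14,5,9,2,10,11,5,3,4,6,14,10,2,14,9,5] :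
      List (Fin 17)).map .mut) ++
  [.perm (Equiv.swap 2 9), .perm (Equiv.swap 3 5), .perm (Equiv.swap 4 14),
   .perm (Equiv.swap 6 11)]

set_option maxHeartbeats 10000000 in
set_option maxRecDepth 10000 in
/-- applying the above sequence to the butterfly quiver of `123121`,
starting the tropical X-vectors at the standard basis `v_i = e_i` of `ℤ^{17}`,
returns both the exchange matrix and the tropical X-vectors to their initial values. -/
theorem butterfly_trop_trivial :
    (butterflyOps.foldl stepTrop (butterfly123121, delta)).1 = butterfly123121 ∧
    (butterflyOps.foldl stepTrop (butterfly123121, delta)).2 = delta := by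
  decide

end Paper
end

section
/- Let ε be a skew-symmetric integer matrix on a finite index set I, let k ∈ I, and set ε' = μ_k(ε). In the field ℚ(A_i : i ∈ I), write p(ε)_i := ∏_{j∈I} A_j^{ε_{ij}}. Then the A-variable mutation at k intertwines the monomial maps p(ε') and p(ε) with the X-variable mutation rule: for every i ∈ I, μ^{A*}_{k,ε}(p(ε')_i) equals p(ε)_k^{−1} if i = k, and equals p(ε)_i · (1 + p(ε)_k^{sgn(−ε_{ik})})^{−ε_{ik}} if i ≠ k, where sgn(a) = +1 for a ≥ 0 and −1 for a < 0. -/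
open scoped BigOperators

namespace Paper

variable {I : Type} [DecidableEq I]

/-- The Laurent monomial `p(ε)_i = ∏_j A_j^{ε_{ij}}` in `ℚ(A_i : i ∈ I)`, the pullback
of the X-variable `X_i` under the canonical map from the A-torus to the X-torus. -/
noncomputable def pMon {I : Type} [Fintype I] (ε : I → I → ℤ) (i : I) : RF I :=
  ∏ j, (gen j : RF I) ^ ε i j


section Aux

variable {K : Type} [Field K]

private lemma if_pos_zpow (x : K) (e : ℤ) :
    (if 0 < e then x ^ e else 1) = x ^ (e ⊔ 0) := by
  rcases lt_or_ge 0 e with h | h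
  · rw [if_pos h]; congr 1; omega
  · rw [if_neg (not_lt.mpr h)]
    have h0 : e ⊔ 0 = 0 := by omega
    rw [h0, zpow_zero]

private lemma if_neg_zpow (x : K) (e : ℤ) :
    (if e < 0 then x ^ (-e) else 1) = x ^ ((-e) ⊔ 0) := by
  rcases lt_or_ge e 0 with h | h
  · rw [if_pos h]; congr 1; omega
  · rw [if_neg (not_lt.mpr h)]
    have h0 : (-e) ⊔ 0 = 0 := by omega
    rw [h0, zpow_zero]

private lemma abs_aux1 (e : ℤ) : e + |e| = 2 * (e ⊔ 0) := by
  rcases le_or_gt 0 e with h | h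
  · rw [abs_of_nonneg h]; omega
  · rw [abs_of_neg h]; omega

private lemma abs_aux2 (e : ℤ) : |e| - e = 2 * ((-e) ⊔ 0) := by
  rcases le_or_gt 0 e with h | h
  · rw [abs_of_nonneg h]; omega
  · rw [abs_of_neg h]; omega

private lemma cancel_aux (p Q T X : K) (hX : X ≠ 0) :
    X * T * ((X⁻¹ * p) * Q) = p * (T * Q) := by
  rw [show X * T * ((X⁻¹ * p) * Q) = (X * X⁻¹) * (p * (T * Q)) from by ring,
    mul_inv_cancel₀ hX, one_mul]

private lemma key_intertwine {I : Type} [Fintype I] [DecidableEq I]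
    (ε : I → I → ℤ) (hskew : ∀ i j, ε j i = -ε i j) (k i : I)
    (a : I → K) (ha : ∀ j, a j ≠ 0) :
    (∏ j, (mutA ε k a j) ^ (mutMat ε k i j)) =
      if i = k then (∏ j, a j ^ ε k j)⁻¹
      else (∏ j, a j ^ ε i j)
        * (1 + (∏ j, a j ^ ε k j) ^ sgn (-ε i k)) ^ (-ε i k) := by
  classical
  have hkk : ε k k = 0 := by have := hskew k k; omega
  set P : K := ∏ j, a j ^ (ε k j ⊔ 0) with hPdef
  set M : K := ∏ j, a j ^ ((-ε k j) ⊔ 0) with hMdef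
  have hPne : P ≠ 0 := Finset.prod_ne_zero_iff.mpr fun j _ => zpow_ne_zero _ (ha j)
  have hMne : M ≠ 0 := Finset.prod_ne_zero_iff.mpr fun j _ => zpow_ne_zero _ (ha j)
  have hsplit : ∀ f : I → K, (∏ j, f j) = f k * ∏ j ∈ Finset.univ.erase k, f j :=
    fun f => (Finset.mul_prod_erase _ f (Finset.mem_univ k)).symm
  have hpk : (∏ j, a j ^ ε k j) = P / M := by
    rw [hPdef, hMdef, ← Finset.prod_div_distrib]
    refine Finset.prod_congr rfl fun j _ => ?_
    rw [← zpow_sub₀ (ha j)]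
    congr 1; omega
  have hPerase : P = ∏ j ∈ Finset.univ.erase k, a j ^ (ε k j ⊔ 0) := by
    rw [hPdef, hsplit (fun j => a j ^ (ε k j ⊔ 0)), hkk]
    norm_num
  have hMerase : M = ∏ j ∈ Finset.univ.erase k, a j ^ ((-ε k j) ⊔ 0) := by
    rw [hMdef, hsplit (fun j => a j ^ ((-ε k j) ⊔ 0)), hkk]
    norm_num
  have hAk : mutA ε k a k = (a k)⁻¹ * (P + M) := by
    have h0 : mutA ε k a k = (a k)⁻¹ * ((∏ j, if 0 < ε k j then a j ^ ε k j else 1)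
        + (∏ j, if ε k j < 0 then a j ^ (-ε k j) else 1)) := by simp [mutA]
    rw [h0,
      Finset.prod_congr rfl fun j (_ : j ∈ Finset.univ) => if_pos_zpow (a j) (ε k j),
      Finset.prod_congr rfl fun j (_ : j ∈ Finset.univ) => if_neg_zpow (a j) (ε k j)]
  have hAne : ∀ j, j ≠ k → mutA ε k a j = a j := by
    intro j hj; simp only [mutA, if_neg hj]
  by_cases hik : i = k
  · subst hik
    rw [if_pos rfl]
    have hm : ∀ j, mutMat ε i i j = -ε i j := by
      intro j; simp [mutMat]
    calc (∏ j, (mutA ε i a j) ^ (mutMat ε i i j))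
        = ∏ j, (mutA ε i a j) ^ (-ε i j) :=
          Finset.prod_congr rfl fun j _ => by rw [hm j]
      _ = ∏ j ∈ Finset.univ.erase i, a j ^ (-ε i j) := by
          rw [hsplit (fun j => (mutA ε i a j) ^ (-ε i j)), hkk]
          norm_num
          exact Finset.prod_congr rfl fun j hj => by
            rw [hAne j (Finset.ne_of_mem_erase hj)]
      _ = (∏ j, a j ^ ε i j)⁻¹ := by
          rw [hsplit (fun j => a j ^ ε i j), hkk, zpow_zero, one_mul,
            ← Finset.prod_inv_distrib]
          exact Finset.prod_congr rfl fun j _ => by rw [← zpow_neg]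
  · rw [if_neg hik]
    have hmik : mutMat ε k i k = -ε i k := by simp [mutMat]
    have hLsplit : (∏ j, (mutA ε k a j) ^ (mutMat ε k i j))
        = ((a k)⁻¹ * (P + M)) ^ (-ε i k)
          * ∏ j ∈ Finset.univ.erase k, a j ^ (mutMat ε k i j) := by
      rw [hsplit (fun j => (mutA ε k a j) ^ (mutMat ε k i j)), hAk, hmik]
      exact congrArg _ (Finset.prod_congr rfl fun j hj => by
        rw [hAne j (Finset.ne_of_mem_erase hj)])
    have hprodi : (∏ j ∈ Finset.univ.erase k, a j ^ ε i j)
        = (a k) ^ (-ε i k) * ∏ j, a j ^ ε i j := by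
      rw [hsplit (fun j => a j ^ ε i j), ← mul_assoc, ← zpow_add₀ (ha k)]
      norm_num
    rw [hpk]
    rcases le_or_gt 0 (ε i k) with hc0 | hc0
    · -- case 0 ≤ ε i k
      have hm : ∀ j, j ≠ k → mutMat ε k i j = ε i j + ε i k * (ε k j ⊔ 0) := by
        intro j hj
        simp only [mutMat, if_neg (by tauto : ¬(i = k ∨ j = k))]
        congr 1
        have h2 : |ε i k| * ε k j + ε i k * |ε k j|
            = 2 * (ε i k * (ε k j ⊔ 0)) := by
          rw [abs_of_nonneg hc0]
          linear_combination ε i k * abs_aux1 (ε k j)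
        rw [h2, Int.mul_ediv_cancel_left _ two_ne_zero]
      have hE : (∏ j ∈ Finset.univ.erase k, a j ^ (mutMat ε k i j))
          = (∏ j ∈ Finset.univ.erase k, a j ^ ε i j) * P ^ ε i k := by
        calc (∏ j ∈ Finset.univ.erase k, a j ^ (mutMat ε k i j))
            = ∏ j ∈ Finset.univ.erase k,
                (a j ^ ε i j * (a j ^ (ε k j ⊔ 0)) ^ ε i k) :=
              Finset.prod_congr rfl fun j hj => by
                rw [hm j (Finset.ne_of_mem_erase hj), zpow_add₀ (ha j),
                  mul_comm (ε i k) _, zpow_mul]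
          _ = _ := by
              rw [Finset.prod_mul_distrib, hPerase, Finset.prod_zpow]
      rcases hc0.lt_or_eq with hc1 | hc1
      · have hsgn : sgn (-ε i k) = -1 := by
          unfold sgn; rw [if_neg (by omega)]
        rw [hsgn, hLsplit, hE, hprodi]
        have h1 : (P / M) ^ (-1 : ℤ) = M / P := by
          rw [zpow_neg, zpow_one, inv_div]
        rw [h1]
        have h2 : 1 + M / P = (P + M) / P := by field_simp
        rw [h2, div_zpow, mul_zpow, inv_zpow, ← zpow_neg, neg_neg]
        rw [zpow_neg (P + M), zpow_neg P]
        have h3 : (a k ^ ε i k) ≠ 0 := zpow_ne_zero _ (ha k)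
        rw [div_eq_mul_inv, inv_inv, zpow_neg (a k) (ε i k)]
        exact cancel_aux (∏ j, a j ^ ε i j) (P ^ ε i k) (((P + M) ^ ε i k)⁻¹)
          (a k ^ ε i k) h3
      · rw [← hc1]
        norm_num
        rw [hLsplit, ← hc1, hE, ← hc1]
        norm_num
        rw [hsplit (fun j => a j ^ ε i j)]
        have : ε i k = 0 := hc1.symm
        rw [this, zpow_zero, one_mul]
    · -- case ε i k < 0
      have hm : ∀ j, j ≠ k → mutMat ε k i j = ε i j + ε i k * ((-ε k j) ⊔ 0) := by
        intro j hj
        simp only [mutMat, if_neg (by tauto : ¬(i = k ∨ j = k))]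
        congr 1
        have h2 : |ε i k| * ε k j + ε i k * |ε k j|
            = 2 * (ε i k * ((-ε k j) ⊔ 0)) := by
          rw [abs_of_neg hc0]
          linear_combination ε i k * abs_aux2 (ε k j)
        rw [h2, Int.mul_ediv_cancel_left _ two_ne_zero]
      have hE : (∏ j ∈ Finset.univ.erase k, a j ^ (mutMat ε k i j))
          = (∏ j ∈ Finset.univ.erase k, a j ^ ε i j) * M ^ ε i k := by
        calc (∏ j ∈ Finset.univ.erase k, a j ^ (mutMat ε k i j))
            = ∏ j ∈ Finset.univ.erase k,
                (a j ^ ε i j * (a j ^ ((-ε k j) ⊔ 0)) ^ ε i k) :=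
              Finset.prod_congr rfl fun j hj => by
                rw [hm j (Finset.ne_of_mem_erase hj), zpow_add₀ (ha j),
                  mul_comm (ε i k) _, zpow_mul]
          _ = _ := by
              rw [Finset.prod_mul_distrib, hMerase, Finset.prod_zpow]
      have hsgn : sgn (-ε i k) = 1 := by
        unfold sgn; rw [if_pos (by omega)]
      rw [hsgn, hLsplit, hE, hprodi]
      have h1 : (P / M : K) ^ (1 : ℤ) = P / M := zpow_one _
      have h2 : 1 + P / M = (P + M) / M := by field_simp; ring
      rw [h1, h2, div_zpow, mul_zpow, inv_zpow, ← zpow_neg, neg_neg]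
      rw [zpow_neg (P + M), zpow_neg M]
      have h3 : (a k ^ ε i k) ≠ 0 := zpow_ne_zero _ (ha k)
      rw [div_eq_mul_inv, inv_inv, zpow_neg (a k) (ε i k)]
      exact cancel_aux (∏ j, a j ^ ε i j) (M ^ ε i k) (((P + M) ^ ε i k)⁻¹)
        (a k ^ ε i k) h3

end Aux

/-- the A-variable mutation at `k` intertwines the monomial maps `p(ε')`
(`ε' = μ_k(ε)`) and `p(ε)` with the X-variable mutation rule: the substitution
`μ^{A*}_{k,ε}` sends `p(ε')_i = ∏_j A_j^{ε'_{ij}}` to `p(ε)_k⁻¹` for `i = k` and to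
`p(ε)_i (1 + p(ε)_k^{sgn(−ε_{ik})})^{−ε_{ik}}` for `i ≠ k`. -/
theorem mutA_p_intertwine {I : Type} [Fintype I] [DecidableEq I]
    (ε : I → I → ℤ) (hskew : ∀ i j, ε j i = -ε i j) (k : I) (i : I) :
    (∏ j, (mutA ε k (fun l => (gen l : RF I)) j) ^ (mutMat ε k i j)) =
      if i = k then (pMon ε k)⁻¹
      else pMon ε i * (1 + pMon ε k ^ sgn (-ε i k)) ^ (-ε i k) := by
  classical
  have ha : ∀ j : I, (gen j : RF I) ≠ 0 := by
    intro j h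
    exact MvPolynomial.X_ne_zero j
      ((IsFractionRing.injective (MvPolynomial I ℚ) (RF I)) (by simpa [gen] using h))
  simpa [pMon] using key_intertwine ε hskew k i (fun l => (gen l : RF I)) ha

end Paper
end
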